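/- Let n ≥ 2 and t ≥ 1 be integers. For every integer i with t ≤ i ≤ 2t − 1, the complete n-ary tree T(n,i) has a locating coloring with the c^t_{a,A} property (for some color a and color set A) using at most 1 + n^t + n^{2t−1} colors; in particular χ_L(T(n,i)) ≤ 1 + n^t + n^{2t−1}. -/

import Mathlib

/-- Vertices of the complete `n`-ary tree of depth `k`:
sequences over an `n`-letter alphabet (encoded as `Fin n`) of length at most `k`. -/
def naryVertex (n k : ℕ) : Type := {l : List (Fin n) // l.length ≤ k}

/-- The complete `n`-ary tree `T(n,k)`: the empty sequence is the root (center), and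
each sequence is adjacent to its one-letter extensions. -/
def naryTree (n k : ℕ) : SimpleGraph (naryVertex n k) where
  Adj u v := (∃ a : Fin n, u.1 = a :: v.1) ∨ (∃ a : Fin n, v.1 = a :: u.1)
  symm := ⟨fun u v h => h.symm⟩
  loopless := ⟨by
    rintro u (⟨a, ha⟩ | ⟨a, ha⟩) <;>
      simpa using congrArg List.length ha⟩

/-- The root (center) of `T(n,k)`: the empty sequence. -/
def naryRoot (n k : ℕ) : naryVertex n k := ⟨[], Nat.zero_le k⟩

/-- `c` is a locating `m`-coloring of `G`: a proper vertex coloring with colors in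
`{1,…,m}` such that all vertices have distinct color codes, where the color code of `v`
is the tuple of distances `d(v, C_i) = min {d(v,x) : x ∈ C_i}` to the color classes. -/
def IsLocatingColoring {V : Type*} (G : SimpleGraph V) (m : ℕ) (c : V → ℕ) : Prop :=
  (∀ v, c v ∈ Finset.Icc 1 m) ∧
  (∀ u v, G.Adj u v → c u ≠ c v) ∧
  Function.Injective
    (fun v => fun i : ℕ => sInf {d : ℕ | ∃ x, c x = i ∧ G.dist v x = d})

/-- The locating chromatic number of `G`: the least `m` such that `G` has a
locating `m`-coloring. -/
noncomputable def locatingChromaticNumber {V : Type*} (G : SimpleGraph V) : ℕ :=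
  sInf {m | ∃ c : V → ℕ, IsLocatingColoring G m c}

/-- A coloring `c` of `T(n,k)` has the `c^t_{a,A}` property if the center gets color
`a ∉ A`, the set of colors used at distance `t` from the center is exactly `A` with
`|A| = n ^ t`, and for each `1 ≤ i ≤ t - 1` the set of colors used at distance `i`
from the center is `{1, 2}`. -/
def HasCtProperty {n k : ℕ} (t : ℕ) (c : naryVertex n k → ℕ) (a : ℕ)
    (A : Finset ℕ) : Prop :=
  c (naryRoot n k) = a ∧ a ∉ A ∧
  c '' {v | (naryTree n k).dist (naryRoot n k) v = t} = (A : Set ℕ) ∧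
  A.card = n ^ t ∧
  ∀ i : ℕ, 1 ≤ i → i ≤ t - 1 →
    c '' {v | (naryTree n k).dist (naryRoot n k) v = i} = {1, 2}

/-!
Color the root `3`, the levels `1, …, t - 1` alternately `1` and `2` (shifted by the branch at
the root, so that every level sees both colors), the `n ^ t` vertices of level `t` with pairwise
distinct colors, and a vertex below level `t` by the word leading to it from its level-`t`
ancestor. The root and the level-`t` vertices are then alone in their color classes, so their
distances to a vertex are coordinates of its color code. Two vertices with the same code thus
have the same color and the same depth. At depth at most `t`, a level-`t` descendant of one of
them is farther from the other; below level `t`, equal colors and distinct vertices force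
distinct level-`t` ancestors, and the ancestor of one is farther from the other. Words of length
`s ≤ t - 1` are coded below `(n + 1) ^ s < n ^ (2 * s + 1) ≤ n ^ (2 * t - 1)`.
-/

open SimpleGraph

section ColorCode

variable {V : Type*}

/-- The coordinates `d(v, C_i)` of the color code of `v`; `IsLocatingColoring G m c` asks for
`colorCode G c` to be injective. -/
noncomputable def colorCode (G : SimpleGraph V) (c : V → ℕ) (v : V) (i : ℕ) : ℕ :=
  sInf {d : ℕ | ∃ x, c x = i ∧ G.dist v x = d}

variable {G : SimpleGraph V} {c : V → ℕ}

lemma colorCode_eq_dist_of_unique {w : V} (hw : ∀ x, c x = c w → x = w) (v : V) :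
    colorCode G c v (c w) = G.dist v w := by
  have hclass : {d : ℕ | ∃ x, c x = c w ∧ G.dist v x = d} = {G.dist v w} := by
    ext d
    constructor
    · rintro ⟨x, hx, rfl⟩
      rw [hw x hx, Set.mem_singleton_iff]
    · rintro rfl
      exact ⟨w, rfl, rfl⟩
  rw [colorCode, hclass, csInf_singleton]

lemma SimpleGraph.Connected.color_eq_of_colorCode_eq (hG : G.Connected) {u v : V}
    (h : colorCode G c u = colorCode G c v) : c v = c u := by
  have hu : colorCode G c u (c u) = 0 := Nat.le_zero.mp (Nat.sInf_le ⟨u, rfl, dist_self⟩)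
  rw [h] at hu
  obtain ⟨x, hx, hvx⟩ | hempty := Nat.sInf_eq_zero.mp hu
  · rwa [← hG.dist_eq_zero_iff.mp hvx] at hx
  · exact absurd hempty (Set.nonempty_iff_ne_empty.mp ⟨_, u, rfl, rfl⟩)

theorem SimpleGraph.Connected.colorCode_injective (hG : G.Connected)
    (hres : ∀ u v, u ≠ v → c u = c v →
      ∃ w, (∀ x, c x = c w → x = w) ∧ G.dist u w ≠ G.dist v w) :
    Function.Injective (colorCode G c) := by
  intro u v h
  by_contra hne
  obtain ⟨w, hw, hdist⟩ := hres u v hne (hG.color_eq_of_colorCode_eq h).symm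
  rw [← colorCode_eq_dist_of_unique hw, ← colorCode_eq_dist_of_unique hw, h] at hdist
  exact hdist rfl

lemma locatingChromaticNumber_le {m : ℕ} (h : IsLocatingColoring G m c) :
    locatingChromaticNumber G ≤ m :=
  Nat.sInf_le ⟨c, h⟩

end ColorCode

section NaryTree

variable {n k : ℕ}

lemma naryTree_exists_walk_append (p x : List (Fin n)) (h : (p ++ x).length ≤ k)
    (h' : x.length ≤ k) :
    ∃ W : (naryTree n k).Walk ⟨p ++ x, h⟩ ⟨x, h'⟩, W.length = p.length := by
  induction p with
  | nil => exact ⟨Walk.nil, rfl⟩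
  | cons a p ih =>
    have hp : (p ++ x).length ≤ k := by
      simp only [List.cons_append, List.length_cons] at h
      omega
    obtain ⟨W, hW⟩ := ih hp
    refine ⟨Walk.cons (Or.inl ⟨a, rfl⟩) W, ?_⟩
    exact congrArg Nat.succ hW

lemma naryTree_exists_walk_of_suffix {u w : naryVertex n k} (h : w.1 <:+ u.1) :
    ∃ W : (naryTree n k).Walk u w, W.length = u.1.length - w.1.length := by
  obtain ⟨p, hp⟩ := h
  obtain ⟨W, hW⟩ := naryTree_exists_walk_append p w.1 (hp ▸ u.2) w.2
  have hu : (⟨p ++ w.1, hp ▸ u.2⟩ : naryVertex n k) = u := Subtype.ext hp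
  refine ⟨W.copy hu rfl, (W.length_copy hu rfl).trans ?_⟩
  rw [hW, ← hp, List.length_append]
  omega

lemma naryTree_connected : (naryTree n k).Connected :=
  (connected_iff_exists_forall_reachable _).mpr ⟨naryRoot n k, fun v =>
    (naryTree_exists_walk_of_suffix (u := v) (w := naryRoot n k) List.nil_suffix).elim
      fun W _ => W.reachable.symm⟩

lemma naryTree_length_le_walk_length_add {u w : naryVertex n k} (W : (naryTree n k).Walk u w) :
    u.1.length ≤ W.length + w.1.length := by
  induction W with
  | nil => omega
  | cons hadj W ih =>
    rw [Walk.length_cons]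
    rcases hadj with ⟨a, ha⟩ | ⟨a, ha⟩ <;>
    · have := congrArg List.length ha
      simp only [List.length_cons] at this
      omega

lemma naryTree_suffix_of_walk_length_add_eq {u w : naryVertex n k}
    (W : (naryTree n k).Walk u w) (h : W.length + w.1.length = u.1.length) : w.1 <:+ u.1 := by
  induction W with
  | nil => exact List.suffix_refl _
  | cons hadj W ih =>
    rw [Walk.length_cons] at h
    rcases hadj with ⟨a, ha⟩ | ⟨a, ha⟩
    · have hlen := congrArg List.length ha
      simp only [List.length_cons] at hlen
      exact ha ▸ (ih (by omega)).trans (List.suffix_cons a _)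
    · have := naryTree_length_le_walk_length_add W
      have hlen := congrArg List.length ha
      simp only [List.length_cons] at hlen
      omega

lemma naryTree_length_le_dist_add (u w : naryVertex n k) :
    u.1.length ≤ (naryTree n k).dist u w + w.1.length := by
  obtain ⟨W, hW⟩ := naryTree_connected.exists_walk_length_eq_dist u w
  exact hW ▸ naryTree_length_le_walk_length_add W

lemma naryTree_suffix_of_dist_add_eq {u w : naryVertex n k}
    (h : (naryTree n k).dist u w + w.1.length = u.1.length) : w.1 <:+ u.1 := by
  obtain ⟨W, hW⟩ := naryTree_connected.exists_walk_length_eq_dist u w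
  exact naryTree_suffix_of_walk_length_add_eq W (hW ▸ h)

lemma naryTree_dist_of_suffix {u w : naryVertex n k} (h : w.1 <:+ u.1) :
    (naryTree n k).dist u w = u.1.length - w.1.length := by
  obtain ⟨W, hW⟩ := naryTree_exists_walk_of_suffix h
  have := naryTree_length_le_dist_add u w
  have := dist_le W
  omega

lemma naryTree_dist_root (v : naryVertex n k) :
    (naryTree n k).dist (naryRoot n k) v = v.1.length := by
  rw [dist_comm, naryTree_dist_of_suffix List.nil_suffix]
  rfl

end NaryTree

section WordEncoding

variable {n : ℕ}

def wordValue (n : ℕ) (l : List (Fin n)) : ℕ := Nat.ofDigits n (l.map Fin.val)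

lemma wordValue_lt (hn : 1 < n) (l : List (Fin n)) : wordValue n l < n ^ l.length := by
  have := Nat.ofDigits_lt_base_pow_length hn (l := l.map Fin.val) (by simp)
  rwa [List.length_map] at this

lemma eq_of_wordValue_eq (hn : 1 < n) {l₁ l₂ : List (Fin n)} (hl : l₁.length = l₂.length)
    (h : wordValue n l₁ = wordValue n l₂) : l₁ = l₂ :=
  List.map_injective_iff.mpr Fin.val_injective
    (Nat.ofDigits_inj_of_len_eq hn (by simpa using hl) (by simp) (by simp) h)

lemma exists_wordValue_eq (hn : 1 < n) {t j : ℕ} (hj : j < n ^ t) :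
    ∃ l : List (Fin n), l.length = t ∧ wordValue n l = j := by
  obtain ⟨L, ⟨hlen, hL⟩, hLj⟩ := (Nat.bijOn_ofDigits hn t).surjOn hj
  lift L to List (Fin n) using hL
  exact ⟨L, by simpa using hlen, hLj⟩

/-- Base `n + 1` with the digits `1, …, n`, so that words of different lengths get
different codes. -/
def wordCode (n : ℕ) (l : List (Fin n)) : ℕ := Nat.ofDigits (n + 1) (l.map (·.val + 1))

lemma wordCode_injective (hn : 0 < n) : Function.Injective (wordCode n) := by
  have hdigits (l : List (Fin n)) : (n + 1).digits (wordCode n l) = l.map (·.val + 1) :=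
    Nat.digits_ofDigits (n + 1) (Nat.lt_add_of_pos_left hn) _ (by simp) (by simp)
  intro l₁ l₂ h
  have hmap : l₁.map (·.val + 1) = l₂.map (·.val + 1) := by rw [← hdigits, ← hdigits, h]
  exact List.map_injective_iff.mpr (fun a b hab => Fin.ext (by simpa using hab)) hmap

lemma wordCode_pos {l : List (Fin n)} (hl : l ≠ []) : 0 < wordCode n l := by
  obtain ⟨a, l, rfl⟩ := List.exists_cons_of_ne_nil hl
  simp [wordCode, Nat.ofDigits_cons]

lemma wordCode_lt (hn : 0 < n) (l : List (Fin n)) : wordCode n l < (n + 1) ^ l.length := by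
  have := Nat.ofDigits_lt_base_pow_length (Nat.lt_add_of_pos_left hn)
    (l := l.map (·.val + 1)) (by simp)
  rwa [List.length_map] at this

lemma wordCode_take_pos {t : ℕ} {l : List (Fin n)} (h : t < l.length) :
    0 < wordCode n (l.take (l.length - t)) :=
  wordCode_pos (List.ne_nil_of_length_pos (by rw [List.length_take]; omega))

end WordEncoding

lemma List.getLastD_cons_of_ne_nil {α : Type*} {l : List α} (hl : l ≠ []) (a d : α) :
    (a :: l).getLastD d = l.getLastD d := by
  obtain ⟨b, l, rfl⟩ := List.exists_cons_of_ne_nil hl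
  simp only [List.getLastD_cons]

section BaseColoring

variable {n t k : ℕ}

/-- Vertex words are read from the leaf: the last letter of `v.1` is the branch at the root, and
`v.1.drop (v.1.length - t)` is the level-`t` ancestor of `v`. -/
def baseColoring (n t : ℕ) {k : ℕ} (v : naryVertex n k) : ℕ :=
  if v.1.length = 0 then 3
  else if v.1.length < t then 1 + (v.1.length + (v.1.map Fin.val).getLastD 0) % 2
  else if v.1.length = t then 4 + wordValue n v.1
  else 3 + n ^ t + wordCode n (v.1.take (v.1.length - t))

lemma baseColoring_of_length_lt {v : naryVertex n k} (h0 : v.1.length ≠ 0)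
    (h : v.1.length < t) :
    baseColoring n t v = 1 + (v.1.length + (v.1.map Fin.val).getLastD 0) % 2 := by
  rw [baseColoring, if_neg h0, if_pos h]

lemma baseColoring_of_length_eq (ht : 0 < t) {v : naryVertex n k} (h : v.1.length = t) :
    baseColoring n t v = 4 + wordValue n v.1 := by
  rw [baseColoring, if_neg (by omega), if_neg (by omega), if_pos h]

lemma baseColoring_of_lt_length {v : naryVertex n k} (h : t < v.1.length) :
    baseColoring n t v = 3 + n ^ t + wordCode n (v.1.take (v.1.length - t)) := by
  rw [baseColoring, if_neg (by omega), if_neg (by omega), if_neg (by omega)]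

lemma one_le_baseColoring (v : naryVertex n k) : 1 ≤ baseColoring n t v := by
  unfold baseColoring
  split_ifs <;> omega

lemma baseColoring_le (hn : 1 < n) (v : naryVertex n k) :
    baseColoring n t v ≤ 2 + n ^ t + (n + 1) ^ (k - t) := by
  have hpow : 0 < n ^ t := pow_pos (by omega) t
  have hpow' : 0 < (n + 1) ^ (k - t) := pow_pos (by omega) _
  unfold baseColoring
  split_ifs with h0 h1 h2
  · omega
  · omega
  · have := wordValue_lt hn v.1
    rw [h2] at this
    omega
  · have hcode := wordCode_lt (by omega) (v.1.take (v.1.length - t))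
    have hmono : (n + 1) ^ (v.1.length - t) ≤ (n + 1) ^ (k - t) :=
      Nat.pow_le_pow_right (by omega) (by have := v.2; omega)
    rw [List.length_take, min_eq_left (by omega)] at hcode
    omega

lemma eq_naryRoot_of_baseColoring_eq_three {x : naryVertex n k} (h : baseColoring n t x = 3) :
    x = naryRoot n k := by
  unfold baseColoring at h
  split_ifs at h with h0 h1 h2
  · exact Subtype.ext (List.length_eq_zero_iff.mp h0)
  · omega
  · omega
  · have := wordCode_take_pos (t := t) (by omega : t < x.1.length)
    omega

lemma eq_of_baseColoring_eq_of_length_eq (hn : 1 < n) (ht : 0 < t) {w x : naryVertex n k}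
    (hw : w.1.length = t) (h : baseColoring n t x = baseColoring n t w) : x = w := by
  have hw_lt := wordValue_lt hn w.1
  rw [hw] at hw_lt
  rw [baseColoring_of_length_eq ht hw] at h
  unfold baseColoring at h
  split_ifs at h with h0 h1 h2
  · omega
  · omega
  · exact Subtype.ext (eq_of_wordValue_eq hn (h2.trans hw.symm) (by omega))
  · have := wordCode_take_pos (t := t) (by omega : t < x.1.length)
    omega

lemma baseColoring_ne_of_cons (hn : 1 < n) {u v : naryVertex n k} {a : Fin n}
    (h : u.1 = a :: v.1) : baseColoring n t u ≠ baseColoring n t v := by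
  have hlen : u.1.length = v.1.length + 1 := by simp [h]
  have hpow : 0 < n ^ t := pow_pos (by omega) t
  unfold baseColoring
  split_ifs <;> try omega
  · -- same branch at the root, adjacent levels
    have hbranch : (u.1.map Fin.val).getLastD 0 = (v.1.map Fin.val).getLastD 0 := by
      rw [h, List.map_cons, List.getLastD_cons_of_ne_nil (by simpa using ‹¬v.1.length = 0›)]
    omega
  · have := wordCode_take_pos (t := t) (by omega : t < u.1.length)
    have := wordValue_lt hn v.1
    rw [‹v.1.length = t›] at this
    omega
  · intro hcode
    have := congrArg List.length (wordCode_injective (by omega) (by omega : wordCode n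
      (u.1.take (u.1.length - t)) = wordCode n (v.1.take (v.1.length - t))))
    simp only [List.length_take] at this
    omega

end BaseColoring

section Locating

variable {n t k : ℕ}

lemma baseColoring_resolving_of_length_ne {u v : naryVertex n k}
    (hlen : u.1.length ≠ v.1.length) :
    ∃ w, (∀ x, baseColoring n t x = baseColoring n t w → x = w) ∧
      (naryTree n k).dist u w ≠ (naryTree n k).dist v w := by
  refine ⟨naryRoot n k, fun x hx => eq_naryRoot_of_baseColoring_eq_three (hx.trans rfl), ?_⟩
  rwa [dist_comm, naryTree_dist_root, dist_comm, naryTree_dist_root]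

/-- A level-`t` descendant of `u` separates `u` from every other vertex of its level. -/
lemma baseColoring_resolving_of_length_le (hn : 1 < n) (ht : 0 < t) (htk : t ≤ k)
    {u v : naryVertex n k} (hne : u ≠ v) (hlen : u.1.length = v.1.length)
    (hut : u.1.length ≤ t) :
    ∃ w, (∀ x, baseColoring n t x = baseColoring n t w → x = w) ∧
      (naryTree n k).dist u w ≠ (naryTree n k).dist v w := by
  have hw_len :
      (List.replicate (t - u.1.length) (⟨0, by omega⟩ : Fin n) ++ u.1).length = t := by
    simp only [List.length_append, List.length_replicate]
    omega
  let w : naryVertex n k := ⟨_, hw_len.trans_le htk⟩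
  have hw : w.1.length = t := hw_len
  have huw : u.1 <:+ w.1 := List.suffix_append _ _
  refine ⟨w, fun x hx => eq_of_baseColoring_eq_of_length_eq hn ht hw hx, fun hdist => hne ?_⟩
  have hvw : v.1 <:+ w.1 := by
    refine naryTree_suffix_of_dist_add_eq ?_
    rw [dist_comm, ← hdist, dist_comm, naryTree_dist_of_suffix huw]
    omega
  exact Subtype.ext ((List.suffix_of_suffix_length_le huw hvw hlen.le).eq_of_length hlen)

/-- Below level `t`, the level-`t` ancestor and the color together determine a vertex. -/
lemma baseColoring_resolving_of_lt_length (hn : 1 < n) (ht : 0 < t) {u v : naryVertex n k}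
    (hne : u ≠ v) (hc : baseColoring n t u = baseColoring n t v)
    (hlen : u.1.length = v.1.length) (htu : t < u.1.length) :
    ∃ w, (∀ x, baseColoring n t x = baseColoring n t w → x = w) ∧
      (naryTree n k).dist u w ≠ (naryTree n k).dist v w := by
  have hw_len : (u.1.drop (u.1.length - t)).length = t := by simp only [List.length_drop]; omega
  let w : naryVertex n k := ⟨_, hw_len.trans_le (htu.le.trans u.2)⟩
  have hw : w.1.length = t := hw_len
  have hwu : w.1 <:+ u.1 := List.drop_suffix _ _
  refine ⟨w, fun x hx => eq_of_baseColoring_eq_of_length_eq hn ht hw hx, fun hdist => hne ?_⟩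
  have hwv : w.1 <:+ v.1 := by
    refine naryTree_suffix_of_dist_add_eq ?_
    rw [← hdist, naryTree_dist_of_suffix hwu]
    omega
  have hdrop : u.1.drop (u.1.length - t) = v.1.drop (v.1.length - t) := by
    have := List.suffix_iff_eq_drop.mp hwv
    rwa [hw] at this
  have htake : u.1.take (u.1.length - t) = v.1.take (v.1.length - t) := by
    rw [baseColoring_of_lt_length htu, baseColoring_of_lt_length (hlen ▸ htu)] at hc
    exact wordCode_injective (by omega) (by omega)
  apply Subtype.ext
  calc u.1 = u.1.take (u.1.length - t) ++ u.1.drop (u.1.length - t) :=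
        (List.take_append_drop _ _).symm
    _ = v.1.take (v.1.length - t) ++ v.1.drop (v.1.length - t) := by rw [htake, hdrop]
    _ = v.1 := List.take_append_drop _ _

theorem isLocatingColoring_baseColoring (hn : 1 < n) (ht : 0 < t) (htk : t ≤ k) :
    IsLocatingColoring (naryTree n k) (2 + n ^ t + (n + 1) ^ (k - t)) (baseColoring n t) := by
  refine ⟨fun v => Finset.mem_Icc.mpr ⟨one_le_baseColoring v, baseColoring_le hn v⟩, ?_, ?_⟩
  · rintro u v (⟨a, ha⟩ | ⟨a, ha⟩)
    · exact baseColoring_ne_of_cons hn ha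
    · exact (baseColoring_ne_of_cons hn ha).symm
  · refine naryTree_connected.colorCode_injective fun u v hne hc => ?_
    rcases ne_or_eq u.1.length v.1.length with hlen | hlen
    · exact baseColoring_resolving_of_length_ne hlen
    rcases le_or_gt u.1.length t with hut | htu
    · exact baseColoring_resolving_of_length_le hn ht htk hne hlen hut
    · exact baseColoring_resolving_of_lt_length hn ht hne hc hlen htu

end Locating

section CtProperty

variable {n t k : ℕ}

lemma baseColoring_image_level_eq (hn : 1 < n) (ht : 0 < t) (htk : t ≤ k) :
    baseColoring n t '' {v : naryVertex n k | (naryTree n k).dist (naryRoot n k) v = t} =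
      ((Finset.range (n ^ t)).image (4 + ·) : Finset ℕ) := by
  ext κ
  simp only [Set.mem_image, Set.mem_ofPred_eq, naryTree_dist_root, Finset.coe_image,
    Finset.coe_range, Set.mem_Iio]
  constructor
  · rintro ⟨v, hv, rfl⟩
    have := wordValue_lt hn v.1
    rw [hv] at this
    exact ⟨_, this, (baseColoring_of_length_eq ht hv).symm⟩
  · rintro ⟨j, hj, rfl⟩
    obtain ⟨l, hl, rfl⟩ := exists_wordValue_eq hn hj
    exact ⟨⟨l, hl.trans_le htk⟩, hl, baseColoring_of_length_eq ht hl⟩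

lemma baseColoring_image_level_of_lt (hn : 1 < n) (htk : t ≤ k) {i : ℕ} (hi : 0 < i)
    (hit : i < t) :
    baseColoring n t '' {v : naryVertex n k | (naryTree n k).dist (naryRoot n k) v = i} =
      {1, 2} := by
  ext κ
  simp only [Set.mem_image, Set.mem_ofPred_eq, naryTree_dist_root, Set.mem_insert_iff,
    Set.mem_singleton_iff]
  constructor
  · rintro ⟨v, hv, rfl⟩
    rw [baseColoring_of_length_lt (by omega) (by omega), hv]
    omega
  · intro hκ
    let b : Fin n := ⟨(κ + 1 + i) % 2, (Nat.mod_lt _ two_pos).trans_le hn⟩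
    let l := List.replicate (i - 1) (⟨0, by omega⟩ : Fin n) ++ [b]
    have hl : l.length = i := by
      simp only [l, List.length_append, List.length_replicate, List.length_singleton]
      omega
    let v : naryVertex n k := ⟨l, by omega⟩
    have hv : v.1.length = i := hl
    refine ⟨v, hl, (baseColoring_of_length_lt (v := v) (by omega) (by omega)).trans ?_⟩
    change 1 + (l.length + (l.map Fin.val).getLastD 0) % 2 = κ
    simp only [hl, l, b, List.map_append, List.map_cons, List.map_nil, List.getLastD_concat]
    omega

theorem hasCtProperty_baseColoring (hn : 1 < n) (ht : 0 < t) (htk : t ≤ k) :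
    HasCtProperty t (baseColoring (k := k) n t) 3 ((Finset.range (n ^ t)).image (4 + ·)) :=
  ⟨if_pos rfl, fun h => by obtain ⟨_, _, h⟩ := Finset.mem_image.mp h; omega,
    baseColoring_image_level_eq hn ht htk,
    by rw [Finset.card_image_of_injective _ (add_right_injective 4), Finset.card_range],
    fun _ hi hit => baseColoring_image_level_of_lt hn htk hi (by omega)⟩

end CtProperty

lemma succ_pow_lt_pow_two_mul_add_one {n : ℕ} (hn : 1 < n) (s : ℕ) :
    (n + 1) ^ s < n ^ (2 * s + 1) :=
  calc (n + 1) ^ s ≤ (n ^ 2) ^ s := Nat.pow_le_pow_left (by nlinarith) s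
    _ = n ^ (2 * s) := (pow_mul n 2 s).symm
    _ < n ^ (2 * s + 1) := Nat.pow_lt_pow_right hn (by omega)

/-- Let `n ≥ 2` and `t ≥ 1`. For every `t ≤ i ≤ 2t - 1`, the tree `T(n,i)` has a
locating coloring with the `c^t_{a,A}` property using at most `1 + n^t + n^(2t-1)`
colors; in particular `χ_L(T(n,i)) ≤ 1 + n^t + n^(2t-1)`. -/
theorem naryTree_base_locating_coloring (n t : ℕ) (hn : 2 ≤ n) (ht : 1 ≤ t)
    (i : ℕ) (hi₁ : t ≤ i) (hi₂ : i ≤ 2 * t - 1) :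
    (∃ (m : ℕ) (c : naryVertex n i → ℕ) (a : ℕ) (A : Finset ℕ),
      m ≤ 1 + n ^ t + n ^ (2 * t - 1) ∧
      IsLocatingColoring (naryTree n i) m c ∧ HasCtProperty t c a A) ∧
    locatingChromaticNumber (naryTree n i) ≤ 1 + n ^ t + n ^ (2 * t - 1) := by
  have hcolors : 2 + n ^ t + (n + 1) ^ (i - t) ≤ 1 + n ^ t + n ^ (2 * t - 1) := by
    have := succ_pow_lt_pow_two_mul_add_one hn (i - t)
    have := Nat.pow_le_pow_right (by omega : 0 < n) (by omega : 2 * (i - t) + 1 ≤ 2 * t - 1)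
    omega
  have hloc := isLocatingColoring_baseColoring hn ht hi₁
  exact ⟨⟨_, baseColoring n t, 3, _, hcolors, hloc, hasCtProperty_baseColoring hn ht hi₁⟩,
    (locatingChromaticNumber_le hloc).trans hcolors⟩
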